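/- Let ū ∈ U_ad be weakly Pareto optimal. Then for every target direction r ∈ ℝ^k with r > 0 and every t̄ ∈ ℝ, the point ū is a global solution of the reformulated Pascoletti–Serafini problem (RP^PS_{z,r}) with reference point z := Ĵ(ū) − t̄ r, i.e. Ĵ^{g_{z,r}}(ū) ≤ Ĵ^{g_{z,r}}(u) for all u ∈ U_ad. -/

import Mathlib

/-- The Pascoletti–Serafini scalarization function
`u ↦ max_{1 ≤ i ≤ k} (Ĵ_i(u) − z_i) / r_i`, evaluated at the objective vector `y`. -/
noncomputable def psScal {k : ℕ} (hk : 0 < k) (z r : Fin k → ℝ) (y : Fin k → ℝ) : ℝ :=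
  Finset.univ.sup' (Finset.univ_nonempty_iff.mpr ⟨⟨0, hk⟩⟩) fun i => (y i - z i) / r i

theorem psScal_sub_smul_self {k : ℕ} (hk : 0 < k) {r : Fin k → ℝ} (hr : ∀ i, r i ≠ 0)
    (y : Fin k → ℝ) (t : ℝ) :
    psScal hk (fun i => y i - t * r i) r y = t := by
  simp only [psScal, sub_sub_cancel, mul_div_cancel_right₀ _ (hr _), Finset.sup'_const]

theorem le_psScal_sub_smul_iff {k : ℕ} (hk : 0 < k) {r : Fin k → ℝ} (hr : ∀ i, 0 < r i)
    (w y : Fin k → ℝ) (t : ℝ) :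
    t ≤ psScal hk (fun i => w i - t * r i) r y ↔ ∃ i, w i ≤ y i := by
  simp only [psScal, Finset.le_sup'_iff, Finset.mem_univ, true_and, le_div_iff₀ (hr _)]
  exact exists_congr fun i => by constructor <;> intro <;> linarith

/-- **Every weakly Pareto optimal point solves a PS problem.**
Let `ubar ∈ Uad` be weakly Pareto optimal.  Then for every target direction `r > 0`
and every `tbar ∈ ℝ`, the point `ubar` is a global solution of the reformulated
Pascoletti–Serafini problem with reference point `z := J(ubar) − tbar r`, i.e.
`Ĵ^{g_{z,r}}(ubar) ≤ Ĵ^{g_{z,r}}(u)` for all `u ∈ Uad`. -/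
theorem weakly_pareto_optimal_solves_psProblem
    {U : Type*}
    {k : ℕ} (hk : 2 ≤ k) (Uad : Set U)
    (J : U → Fin k → ℝ)
    (ubar : U)
    (hweak : ∀ ut ∈ Uad, ¬ (∀ i, J ut i < J ubar i))
    (r : Fin k → ℝ) (hr : ∀ i, 0 < r i) (tbar : ℝ) :
    ∀ u ∈ Uad,
      psScal (by omega) (fun i => J ubar i - tbar * r i) r (J ubar) ≤
        psScal (by omega) (fun i => J ubar i - tbar * r i) r (J u) := by
  intro u hu
  rw [psScal_sub_smul_self _ (fun i => (hr i).ne'), le_psScal_sub_smul_iff _ hr]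
  simpa only [not_forall, not_lt] using hweak u hu
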